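/- For h,k = 1,…,d let A^{hk} and M^{hk} be m×m real matrices such that |Im Σ_{h,k=1}^d (A^{hk}θ^k, θ^h)| ≤ C₀ Re Σ_{h,k=1}^d (M^{hk}θ^k, θ^h) and 0 ≤ Re Σ_{h,k=1}^d (A^{hk}θ^k, θ^h) ≤ C₁ Re Σ_{h,k=1}^d (M^{hk}θ^k, θ^h) for some constants C₀, C₁ > 0 and every θ¹,…,θ^d ∈ ℂ^m. Then |Σ_{h,k=1}^d (A^{hk}θ^k, η^h)| ≤ (C₀ + C₁) (Re Σ_{h,k=1}^d (M^{hk}θ^k, θ^h))^{1/2} (Re Σ_{h,k=1}^d (M^{hk}η^k, η^h))^{1/2} for every θ¹,…,θ^d, η¹,…,η^d ∈ ℂ^m. -/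

import Mathlib

/-!
Write the form `a(θ, η) = Σ (A^{hk} θ^k, η^h)` as `H + i K` with `H`, `K` Hermitian, so that
`H(θ, θ) = Re a(θ, θ)` and `K(θ, θ) = Im a(θ, θ)`. If a Hermitian form `K` satisfies
`|K(θ, θ)| ≤ C P(θ, θ)` for a Hermitian `P`, then `C P + K` and `C P - K` are positive
semidefinite; Cauchy–Schwarz for both, together with `2 K = (C P + K) - (C P - K)` and
`√a √b + √c √d ≤ √(a + c) √(b + d)`, gives `|K(θ, η)| ≤ C √P(θ, θ) √P(η, η)`. Apply this with
`P` the Hermitian part of the form of `M`, to `H` with `C₁` and to `K` with `C₀`.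
-/

open ComplexConjugate

noncomputable section

/-- The sesquilinear form `Σ_{h,k} (A^{hk} θ^k, η^h)` associated with a family of
`m × m` real matrices `A^{hk}` (`h,k = 1,…,d`), where `(·,·)` is the Hermitian inner
product `(u,v) = Σ_i u_i conj(v_i)` on `ℂ^m`. -/
def cform {d m : ℕ} (A : Fin d → Fin d → Fin m → Fin m → ℝ)
    (θ η : Fin d → Fin m → ℂ) : ℂ :=
  ∑ h, ∑ k, ∑ i, ∑ j, (A h k i j : ℂ) * θ k j * conj (η h i)

open RCLike

theorem Real.sqrt_mul_sqrt_add_sqrt_mul_sqrt_le {a b c e : ℝ} (ha : 0 ≤ a) (hb : 0 ≤ b)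
    (hc : 0 ≤ c) (he : 0 ≤ e) : √a * √b + √c * √e ≤ √(a + c) * √(b + e) := by
  simpa [Fin.sum_univ_two] using
    Real.sum_sqrt_mul_sqrt_le Finset.univ (f := ![a, c]) (g := ![b, e])
      (fun i => by fin_cases i <;> assumption) (fun i => by fin_cases i <;> assumption)

namespace LinearMap

variable {𝕜 V : Type*} [RCLike 𝕜] [AddCommGroup V] [Module 𝕜 V]

theorem IsSymm.norm_apply_le {B : V →ₗ⋆[𝕜] V →ₗ[𝕜] 𝕜} (hB : B.IsSymm)
    (hB₀ : ∀ x, 0 ≤ re (B x x)) (x y : V) : ‖B x y‖ ≤ √(re (B x x)) * √(re (B y y)) := by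
  let _ : PreInnerProductSpace.Core 𝕜 V :=
    { inner := fun x y => B x y
      conj_inner_symm := fun x y => hB.eq y x
      re_inner_nonneg := hB₀
      add_left := fun x y z => by simp
      smul_left := fun x y r => by simp }
  have hcs : ‖B x y‖ * ‖B y x‖ ≤ re (B x x) * re (B y y) :=
    InnerProductSpace.Core.inner_mul_inner_self_le x y
  rw [← hB.eq x y, RCLike.norm_conj, ← sq] at hcs
  rw [← Real.sqrt_mul (hB₀ x)]
  exact Real.le_sqrt_of_sq_le hcs

def conjFlip (B : V →ₗ⋆[𝕜] V →ₗ[𝕜] 𝕜) : V →ₗ⋆[𝕜] V →ₗ[𝕜] 𝕜 :=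
  mk₂'ₛₗ (starRingEnd 𝕜) (RingHom.id 𝕜) (fun x y => conj (B y x))
    (fun _ _ _ => by simp) (fun _ _ _ => by simp) (fun _ _ _ => by simp) (fun _ _ _ => by simp)

@[simp]
theorem conjFlip_apply (B : V →ₗ⋆[𝕜] V →ₗ[𝕜] 𝕜) (x y : V) : B.conjFlip x y = conj (B y x) :=
  rfl

def hermPart (B : V →ₗ⋆[𝕜] V →ₗ[𝕜] 𝕜) : V →ₗ⋆[𝕜] V →ₗ[𝕜] 𝕜 := (2⁻¹ : 𝕜) • (B + B.conjFlip)

theorem isSymm_hermPart (B : V →ₗ⋆[𝕜] V →ₗ[𝕜] 𝕜) : B.hermPart.IsSymm :=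
  isSymm_def.2 fun x y => by simp [hermPart, add_comm, map_ofNat]

theorem hermPart_apply_self (B : V →ₗ⋆[𝕜] V →ₗ[𝕜] 𝕜) (x : V) :
    B.hermPart x x = re (B x x) := by
  simp only [hermPart, smul_apply, add_apply, conjFlip_apply, smul_eq_mul, RCLike.add_conj]
  simp

theorem IsSymm.norm_apply_le_of_abs_re_le {S P : V →ₗ⋆[𝕜] V →ₗ[𝕜] 𝕜} (hS : S.IsSymm)
    (hP : P.IsSymm) {C : ℝ} (hC : 0 ≤ C) (h : ∀ x, |re (S x x)| ≤ C * re (P x x)) (x y : V) :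
    ‖S x y‖ ≤ C * √(re (P x x)) * √(re (P y y)) := by
  set Q := (C : 𝕜) • P
  have hQ : Q.IsSymm := isSymm_def.2 fun x y => by simp [Q, RCLike.real_smul_eq_coe_mul, hP.eq]
  have hQ_add : (Q + S).IsSymm := hQ.add hS
  have hQ_sub : (Q - S).IsSymm := isSymm_def.2 fun x y => by simp [hQ.eq, hS.eq]
  have hdiag_add (z : V) : re ((Q + S) z z) = C * re (P z z) + re (S z z) := by
    simp [Q, RCLike.real_smul_eq_coe_mul]
  have hdiag_sub (z : V) : re ((Q - S) z z) = C * re (P z z) - re (S z z) := by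
    simp [Q, RCLike.real_smul_eq_coe_mul]
  have hpos (z : V) : 0 ≤ C * re (P z z) + re (S z z) ∧ 0 ≤ C * re (P z z) - re (S z z) := by
    constructor <;> linarith [abs_le.1 (h z)]
  have hplus := hQ_add.norm_apply_le (fun z => hdiag_add z ▸ (hpos z).1) x y
  have hminus := hQ_sub.norm_apply_le (fun z => hdiag_sub z ▸ (hpos z).2) x y
  rw [hdiag_add, hdiag_add] at hplus
  rw [hdiag_sub, hdiag_sub] at hminus
  have hdiff : (Q + S) x y - (Q - S) x y = 2 * S x y := by
    simp only [add_apply, sub_apply]; ring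
  have h2C : 0 ≤ 2 * C := by positivity
  calc ‖S x y‖ = ‖(Q + S) x y - (Q - S) x y‖ / 2 := by rw [hdiff, norm_mul]; simp
    _ ≤ (‖(Q + S) x y‖ + ‖(Q - S) x y‖) / 2 := by gcongr; exact norm_sub_le _ _
    _ ≤ (√(C * re (P x x) + re (S x x)) * √(C * re (P y y) + re (S y y)) +
          √(C * re (P x x) - re (S x x)) * √(C * re (P y y) - re (S y y))) / 2 := by gcongr
    _ ≤ √(2 * C * re (P x x)) * √(2 * C * re (P y y)) / 2 := by
        have hsum (z : V) : C * re (P z z) + re (S z z) + (C * re (P z z) - re (S z z)) =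
            2 * C * re (P z z) := by ring
        rw [← hsum x, ← hsum y]
        gcongr
        exact Real.sqrt_mul_sqrt_add_sqrt_mul_sqrt_le (hpos x).1 (hpos y).1 (hpos x).2 (hpos y).2
    _ = C * √(re (P x x)) * √(re (P y y)) := by
        rw [Real.sqrt_mul h2C, Real.sqrt_mul h2C]
        linear_combination (√(re (P x x)) * √(re (P y y)) / 2) * Real.mul_self_sqrt h2C

section Complex

variable {V : Type*} [AddCommGroup V] [Module ℂ V]

def skewPart (B : V →ₗ⋆[ℂ] V →ₗ[ℂ] ℂ) : V →ₗ⋆[ℂ] V →ₗ[ℂ] ℂ :=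
  (-(Complex.I / 2)) • (B - B.conjFlip)

theorem isSymm_skewPart (B : V →ₗ⋆[ℂ] V →ₗ[ℂ] ℂ) : B.skewPart.IsSymm :=
  isSymm_def.2 fun x y => by simp [skewPart, map_ofNat]; ring

theorem skewPart_apply_self (B : V →ₗ⋆[ℂ] V →ₗ[ℂ] ℂ) (x : V) :
    B.skewPart x x = (B x x).im := by
  simp only [skewPart, smul_apply, sub_apply, conjFlip_apply, smul_eq_mul, Complex.sub_conj]
  push_cast
  linear_combination (-(B x x).im : ℂ) * Complex.I_sq

theorem hermPart_add_I_smul_skewPart (B : V →ₗ⋆[ℂ] V →ₗ[ℂ] ℂ) :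
    B.hermPart + Complex.I • B.skewPart = B := by
  ext x y
  simp only [hermPart, skewPart, add_apply, smul_apply, sub_apply, conjFlip_apply, smul_eq_mul]
  linear_combination (conj (B y x) - B x y) / 2 * Complex.I_sq

theorem norm_apply_le_of_abs_im_le_of_abs_re_le {B P : V →ₗ⋆[ℂ] V →ₗ[ℂ] ℂ} (hP : P.IsSymm)
    {C₀ C₁ : ℝ} (hC₀ : 0 ≤ C₀) (hC₁ : 0 ≤ C₁) (him : ∀ x, |(B x x).im| ≤ C₀ * (P x x).re)
    (hre : ∀ x, |(B x x).re| ≤ C₁ * (P x x).re) (x y : V) :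
    ‖B x y‖ ≤ (C₀ + C₁) * √(P x x).re * √(P y y).re := by
  have hherm := B.isSymm_hermPart.norm_apply_le_of_abs_re_le hP hC₁
    (fun z => by simpa [hermPart_apply_self] using hre z) x y
  have hskew := B.isSymm_skewPart.norm_apply_le_of_abs_re_le hP hC₀
    (fun z => by simpa [skewPart_apply_self] using him z) x y
  calc ‖B x y‖ = ‖B.hermPart x y + Complex.I * B.skewPart x y‖ := by
        conv_lhs => rw [← B.hermPart_add_I_smul_skewPart]
        rfl
    _ ≤ ‖B.hermPart x y‖ + ‖B.skewPart x y‖ := by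
        simpa using norm_add_le (B.hermPart x y) (Complex.I * B.skewPart x y)
    _ ≤ C₁ * √(P x x).re * √(P y y).re + C₀ * √(P x x).re * √(P y y).re := by
        simp only [RCLike.re_to_complex] at hherm hskew
        exact add_le_add hherm hskew
    _ = (C₀ + C₁) * √(P x x).re * √(P y y).re := by ring

end Complex

end LinearMap

-- Mathlib's sesquilinear forms are conjugate-linear in the first argument, hence the swap.
def cformₗ {d m : ℕ} (A : Fin d → Fin d → Fin m → Fin m → ℝ) :
    (Fin d → Fin m → ℂ) →ₗ⋆[ℂ] (Fin d → Fin m → ℂ) →ₗ[ℂ] ℂ :=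
  LinearMap.mk₂'ₛₗ (starRingEnd ℂ) (RingHom.id ℂ) (fun η θ => cform A θ η)
    (fun _ _ _ => by simp [cform, mul_add, Finset.sum_add_distrib])
    (fun _ _ _ => by simp [cform, Finset.mul_sum, mul_left_comm, mul_assoc])
    (fun _ _ _ => by simp [cform, mul_add, add_mul, Finset.sum_add_distrib])
    (fun _ _ _ => by simp [cform, Finset.mul_sum, mul_left_comm, mul_assoc])

@[simp]
theorem cformₗ_apply {d m : ℕ} (A : Fin d → Fin d → Fin m → Fin m → ℝ)
    (η θ : Fin d → Fin m → ℂ) : cformₗ A η θ = cform A θ η :=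
  rfl

theorem statement13_general (d m : ℕ)
    (A M : Fin d → Fin d → Fin m → Fin m → ℝ) (C₀ C₁ : ℝ) (hC₀ : 0 < C₀) (hC₁ : 0 < C₁)
    (hIm : ∀ θ : Fin d → Fin m → ℂ, |(cform A θ θ).im| ≤ C₀ * (cform M θ θ).re)
    (hRe : ∀ θ : Fin d → Fin m → ℂ,
      0 ≤ (cform A θ θ).re ∧ (cform A θ θ).re ≤ C₁ * (cform M θ θ).re) :
    ∀ θ η : Fin d → Fin m → ℂ,
      ‖cform A θ η‖ ≤
        (C₀ + C₁) * Real.sqrt ((cform M θ θ).re) * Real.sqrt ((cform M η η).re) := by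
  intro θ η
  have hP (x) : ((cformₗ M).hermPart x x).re = (cform M x x).re := by
    simp [LinearMap.hermPart_apply_self]
  have key := LinearMap.norm_apply_le_of_abs_im_le_of_abs_re_le (B := cformₗ A)
    (cformₗ M).isSymm_hermPart hC₀.le hC₁.le (fun x => by simpa [hP] using hIm x)
    (fun x => by
      rw [hP, cformₗ_apply, abs_le]
      constructor <;> linarith [hRe x]) η θ
  simpa [hP, mul_right_comm] using key

theorem statement13 (d m : ℕ) (hd : 0 < d) (hm : 0 < m)
    (A M : Fin d → Fin d → Fin m → Fin m → ℝ) (C₀ C₁ : ℝ) (hC₀ : 0 < C₀) (hC₁ : 0 < C₁)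
    (hIm : ∀ θ : Fin d → Fin m → ℂ, |(cform A θ θ).im| ≤ C₀ * (cform M θ θ).re)
    (hRe : ∀ θ : Fin d → Fin m → ℂ,
      0 ≤ (cform A θ θ).re ∧ (cform A θ θ).re ≤ C₁ * (cform M θ θ).re) :
    ∀ θ η : Fin d → Fin m → ℂ,
      ‖cform A θ η‖ ≤
        (C₀ + C₁) * Real.sqrt ((cform M θ θ).re) * Real.sqrt ((cform M η η).re) :=
  statement13_general d m A M C₀ C₁ hC₀ hC₁ hIm hRe
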